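/- arXiv:2503.24189 — 10 statements merged into one kernel-verified Lean document; each statement's English description precedes it below -/
import Mathlib

section
/- Let q ∈ ℂ with q ≠ 0 and q⁴ ≠ 1, and let ζ, ζ' ∈ ℂ× with ζ, ζ' ∉ {1, −1}. Let D := diag(1, q⁻², q⁻², q⁻⁴) as an endomorphism of ℂ²⊗ℂ². For an endomorphism φ of ℂ²⊗ℂ², the following are equivalent: (i) φ∘D = D∘φ, φ∘E(ζ,ζ') = E(ζ',ζ)∘φ, and φ∘F(ζ,ζ') = F(ζ',ζ)∘φ; (ii) there exists (a₁,a₂,b₁,b₂,c₁,c₂) ∈ ℂ⁶ satisfying the intertwining system such that φ = M(a₁,a₂,b₁,b₂,c₁,c₂). -/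
/-! `D` is diagonal with eigenvalues `1, w, w, w²` for `w = q⁻²`, and these are pairwise distinct
because `q⁴ ≠ 1`; so `φ` commutes with `D` exactly when it preserves the weight spaces, i.e. has
the shape `M(a₁,a₂,b₁,b₂,c₁,c₂)`. For a matrix of that shape, the `E`- and `F`-relations compared
entry by entry are precisely the intertwining system. -/

open Matrix

/-- The quantum bracket `[ζ] = (ζ - ζ⁻¹)/(q - q⁻¹)`. -/
noncomputable def qbr (q ζ : ℂ) : ℂ := (ζ - ζ⁻¹) / (q - q⁻¹)

/-- The endomorphism of `ℂ²⊗ℂ²` with Boltzmann weights `(a₁,a₂,b₁,b₂,c₁,c₂)`,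
in the ordered basis `e₀⊗e₀, e₀⊗e₁, e₁⊗e₀, e₁⊗e₁` (columns are images of basis vectors). -/
def Mmat (a₁ a₂ b₁ b₂ c₁ c₂ : ℂ) : Matrix (Fin 4) (Fin 4) ℂ :=
  !![a₂, 0,  0,  0;
     0,  c₂, b₁, 0;
     0,  b₂, c₁, 0;
     0,  0,  0,  a₁]

/-- The coproduct action of the generator `E` on `V(ζ)⊗V(ζ')` (with Koszul signs). -/
noncomputable def Emat (q ζ ζ' : ℂ) : Matrix (Fin 4) (Fin 4) ℂ :=
  !![0, qbr q ζ', qbr q ζ * ζ'⁻¹, 0;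
     0, 0,        0,              qbr q ζ * ζ'⁻¹;
     0, 0,        0,              -qbr q ζ';
     0, 0,        0,              0]

/-- The coproduct action of the generator `F` on `V(ζ)⊗V(ζ')` (with Koszul signs). -/
def Fmat (ζ ζ' : ℂ) : Matrix (Fin 4) (Fin 4) ℂ :=
  !![0, 0, 0,  0;
     ζ, 0, 0,  0;
     1, 0, 0,  0;
     0, 1, -ζ, 0]

/-- The matrix `diag(1, q⁻², q⁻², q⁻⁴)` (action of `K⊗K` suitably normalized). -/
noncomputable def Dmat (q : ℂ) : Matrix (Fin 4) (Fin 4) ℂ :=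
  !![1, 0, 0, 0;
     0, (q ^ 2)⁻¹, 0, 0;
     0, 0, (q ^ 2)⁻¹, 0;
     0, 0, 0, (q ^ 4)⁻¹]

/-- The eight equations of the intertwining system. -/
noncomputable def IntSys (q ζ ζ' a₁ a₂ b₁ b₂ c₁ c₂ : ℂ) : Prop :=
  qbr q ζ * c₂ + qbr q ζ' * ζ⁻¹ * b₂ = qbr q ζ' * a₂ ∧
  qbr q ζ * b₁ + ζ⁻¹ * qbr q ζ' * c₁ = qbr q ζ * ζ'⁻¹ * a₂ ∧
  qbr q ζ' * ζ⁻¹ * a₁ = ζ'⁻¹ * qbr q ζ * c₂ - qbr q ζ' * b₁ ∧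
  -(qbr q ζ) * a₁ = ζ'⁻¹ * qbr q ζ * b₂ - qbr q ζ' * c₁ ∧
  a₂ = c₁ + ζ * b₂ ∧
  ζ' * a₂ = b₁ + ζ * c₂ ∧
  c₂ - ζ' * b₂ = a₁ ∧
  b₁ - ζ' * c₁ = -(ζ * a₁)

namespace Matrix

variable {n R : Type*} [Fintype n] [DecidableEq n] [CommRing R] [NoZeroDivisors R]

theorem mul_diagonal_eq_diagonal_mul_iff (φ : Matrix n n R) (d : n → R) :
    φ * diagonal d = diagonal d * φ ↔ ∀ i j, d i ≠ d j → φ i j = 0 := by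
  simp only [← Matrix.ext_iff, mul_diagonal, diagonal_mul, mul_comm (d _), mul_eq_mul_left_iff]
  exact forall₂_congr fun i j => ⟨fun h hne => h.resolve_left (Ne.symm hne), fun h => by tauto⟩

end Matrix

theorem Dmat_eq_diagonal (q : ℂ) :
    Dmat q = diagonal ![1, (q ^ 2)⁻¹, (q ^ 2)⁻¹, ((q ^ 2)⁻¹) ^ 2] := by
  ext i j
  fin_cases i <;> fin_cases j <;> simp [Dmat, ← pow_mul]

theorem mul_diagonal_eq_diagonal_mul_iff_exists_Mmat {w : ℂ} (hw0 : w ≠ 0) (hw1 : w ^ 2 ≠ 1)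
    (φ : Matrix (Fin 4) (Fin 4) ℂ) :
    φ * diagonal ![1, w, w, w ^ 2] = diagonal ![1, w, w, w ^ 2] * φ ↔
      ∃ a₁ a₂ b₁ b₂ c₁ c₂ : ℂ, φ = Mmat a₁ a₂ b₁ b₂ c₁ c₂ := by
  have h1w : 1 ≠ w := fun h => hw1 (by rw [← h, one_pow])
  have hww : w ≠ w ^ 2 := by
    rw [ne_eq, sq, left_eq_mul₀ hw0]
    exact h1w.symm
  rw [mul_diagonal_eq_diagonal_mul_iff]
  constructor
  · intro h
    refine ⟨φ 3 3, φ 0 0, φ 1 2, φ 2 1, φ 2 2, φ 1 1, ?_⟩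
    ext i j
    fin_cases i <;> fin_cases j <;> simp [Mmat] <;> apply h <;>
      simp [h1w, hww, h1w.symm, hww.symm, hw1, Ne.symm hw1]
  · rintro ⟨a₁, a₂, b₁, b₂, c₁, c₂, rfl⟩ i j hij
    fin_cases i <;> fin_cases j <;> simp_all [Mmat]

theorem mul_Dmat_eq_Dmat_mul_iff_exists_Mmat {q : ℂ} (hq0 : q ≠ 0) (hq4 : q ^ 4 ≠ 1)
    (φ : Matrix (Fin 4) (Fin 4) ℂ) :
    φ * Dmat q = Dmat q * φ ↔ ∃ a₁ a₂ b₁ b₂ c₁ c₂ : ℂ, φ = Mmat a₁ a₂ b₁ b₂ c₁ c₂ := by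
  refine Dmat_eq_diagonal q ▸ mul_diagonal_eq_diagonal_mul_iff_exists_Mmat (by simpa) ?_ φ
  rwa [inv_pow, ← pow_mul, inv_ne_one]

theorem Mmat_mul_Emat_eq_Emat_mul_Mmat_iff (q ζ ζ' a₁ a₂ b₁ b₂ c₁ c₂ : ℂ) :
    Mmat a₁ a₂ b₁ b₂ c₁ c₂ * Emat q ζ ζ' = Emat q ζ' ζ * Mmat a₁ a₂ b₁ b₂ c₁ c₂ ↔
      qbr q ζ * c₂ + qbr q ζ' * ζ⁻¹ * b₂ = qbr q ζ' * a₂ ∧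
      qbr q ζ * b₁ + ζ⁻¹ * qbr q ζ' * c₁ = qbr q ζ * ζ'⁻¹ * a₂ ∧
      qbr q ζ' * ζ⁻¹ * a₁ = ζ'⁻¹ * qbr q ζ * c₂ - qbr q ζ' * b₁ ∧
      -(qbr q ζ) * a₁ = ζ'⁻¹ * qbr q ζ * b₂ - qbr q ζ' * c₁ := by
  conv_lhs => simp [← Matrix.ext_iff, Fin.forall_fin_succ, mul_apply, Fin.sum_univ_four, Mmat, Emat]
  constructor
  · rintro ⟨⟨h₁, h₂⟩, h₃, h₄⟩
    exact ⟨by linear_combination -h₁, by linear_combination -h₂, by linear_combination -h₃,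
      by linear_combination -h₄⟩
  · rintro ⟨h₁, h₂, h₃, h₄⟩
    exact ⟨⟨by linear_combination -h₁, by linear_combination -h₂⟩, by linear_combination -h₃,
      by linear_combination -h₄⟩

theorem Mmat_mul_Fmat_eq_Fmat_mul_Mmat_iff (ζ ζ' a₁ a₂ b₁ b₂ c₁ c₂ : ℂ) :
    Mmat a₁ a₂ b₁ b₂ c₁ c₂ * Fmat ζ ζ' = Fmat ζ' ζ * Mmat a₁ a₂ b₁ b₂ c₁ c₂ ↔
      a₂ = c₁ + ζ * b₂ ∧ ζ' * a₂ = b₁ + ζ * c₂ ∧ c₂ - ζ' * b₂ = a₁ ∧ b₁ - ζ' * c₁ = -(ζ * a₁) := by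
  conv_lhs => simp [← Matrix.ext_iff, Fin.forall_fin_succ, mul_apply, Fin.sum_univ_four, Mmat, Fmat]
  constructor
  · rintro ⟨h₆, h₅, h₇, h₈⟩
    exact ⟨by linear_combination -h₅, by linear_combination -h₆, by linear_combination -h₇,
      by linear_combination -h₈⟩
  · rintro ⟨h₅, h₆, h₇, h₈⟩
    exact ⟨by linear_combination -h₆, by linear_combination -h₅, by linear_combination -h₇,
      by linear_combination -h₈⟩

theorem IntSys_iff_intertwines (q ζ ζ' a₁ a₂ b₁ b₂ c₁ c₂ : ℂ) :
    IntSys q ζ ζ' a₁ a₂ b₁ b₂ c₁ c₂ ↔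
      Mmat a₁ a₂ b₁ b₂ c₁ c₂ * Emat q ζ ζ' = Emat q ζ' ζ * Mmat a₁ a₂ b₁ b₂ c₁ c₂ ∧
      Mmat a₁ a₂ b₁ b₂ c₁ c₂ * Fmat ζ ζ' = Fmat ζ' ζ * Mmat a₁ a₂ b₁ b₂ c₁ c₂ := by
  rw [Mmat_mul_Emat_eq_Emat_mul_Mmat_iff, Mmat_mul_Fmat_eq_Fmat_mul_Mmat_iff, IntSys]
  simp only [and_assoc]

theorem stmt1_general (q ζ ζ' : ℂ) (hq0 : q ≠ 0) (hq4 : q ^ 4 ≠ 1)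
    (φ : Matrix (Fin 4) (Fin 4) ℂ) :
    (φ * Dmat q = Dmat q * φ ∧
     φ * Emat q ζ ζ' = Emat q ζ' ζ * φ ∧
     φ * Fmat ζ ζ' = Fmat ζ' ζ * φ) ↔
    (∃ a₁ a₂ b₁ b₂ c₁ c₂ : ℂ,
      IntSys q ζ ζ' a₁ a₂ b₁ b₂ c₁ c₂ ∧ φ = Mmat a₁ a₂ b₁ b₂ c₁ c₂) := by
  rw [mul_Dmat_eq_Dmat_mul_iff_exists_Mmat hq0 hq4]
  constructor
  · rintro ⟨⟨a₁, a₂, b₁, b₂, c₁, c₂, rfl⟩, hE, hF⟩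
    exact ⟨a₁, a₂, b₁, b₂, c₁, c₂, (IntSys_iff_intertwines ..).2 ⟨hE, hF⟩, rfl⟩
  · rintro ⟨a₁, a₂, b₁, b₂, c₁, c₂, hsys, rfl⟩
    exact ⟨⟨a₁, a₂, b₁, b₂, c₁, c₂, rfl⟩, (IntSys_iff_intertwines ..).1 hsys⟩

theorem stmt1 (q ζ ζ' : ℂ) (hq0 : q ≠ 0) (hq4 : q ^ 4 ≠ 1)
    (hζ0 : ζ ≠ 0) (hζ'0 : ζ' ≠ 0)
    (hζ1 : ζ ≠ 1) (hζm1 : ζ ≠ -1) (hζ'1 : ζ' ≠ 1) (hζ'm1 : ζ' ≠ -1)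
    (φ : Matrix (Fin 4) (Fin 4) ℂ) :
    (φ * Dmat q = Dmat q * φ ∧
     φ * Emat q ζ ζ' = Emat q ζ' ζ * φ ∧
     φ * Fmat ζ ζ' = Fmat ζ' ζ * φ) ↔
    (∃ a₁ a₂ b₁ b₂ c₁ c₂ : ℂ,
      IntSys q ζ ζ' a₁ a₂ b₁ b₂ c₁ c₂ ∧ φ = Mmat a₁ a₂ b₁ b₂ c₁ c₂) :=
  stmt1_general q ζ ζ' hq0 hq4 φ
end

section
/- Let q ∈ ℂ with q ≠ 0 and q⁴ ≠ 1, and let ζ, ζ' ∈ ℂ× with ζ, ζ' ∉ {1, −1}. Set r := (−ζζ', 1, ζ', ζ, 1−ζ², 0) and r' := (1, −ζζ', −ζ, −ζ', 0, 1−(ζ')²) in ℂ⁶. Then the set of tuples (a₁,a₂,b₁,b₂,c₁,c₂) ∈ ℂ⁶ satisfying the intertwining system is exactly the linear span of r and r', and r, r' are linearly independent; in particular this solution space is two-dimensional. -/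
open Matrix

/-- The tuple `(a₁,a₂,b₁,b₂,c₁,c₂)` of matrix coefficients of the R-matrix `R`. -/
def rvec (ζ ζ' : ℂ) : Fin 6 → ℂ := ![-(ζ * ζ'), 1, ζ', ζ, 1 - ζ ^ 2, 0]

/-- The tuple `(a₁,a₂,b₁,b₂,c₁,c₂)` of matrix coefficients of the R-matrix `R'`. -/
def rvec' (ζ ζ' : ℂ) : Fin 6 → ℂ := ![1, -(ζ * ζ'), -ζ, -ζ', 0, 1 - ζ' ^ 2]

/-!
Equations 5–8 do not involve `q`, and the sixth follows from the other three, so they cut out a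
three-dimensional space; the first equation, with its denominators cleared (possible as
`q - q⁻¹ ≠ 0`), removes one more dimension. A solution is then determined by its coordinates
`(c₁, c₂)`, which are `(1 - ζ², 0)` on `r` and `(0, 1 - ζ'²)` on `r'`.
-/

lemma sub_inv_ne_zero_of_sq_ne_one {K : Type*} [Field K] {q : K} (hq0 : q ≠ 0)
    (hq2 : q ^ 2 ≠ 1) : q - q⁻¹ ≠ 0 := by
  intro h
  apply hq2
  field_simp at h
  linear_combination h

lemma one_sub_sq_ne_zero {R : Type*} [CommRing R] [NoZeroDivisors R] {ζ : R} (h1 : ζ ≠ 1)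
    (hm1 : ζ ≠ -1) : 1 - ζ ^ 2 ≠ 0 := by
  rw [sub_ne_zero, ne_comm, sq]
  exact fun h => (mul_self_eq_one_iff.mp h).elim h1 hm1

section IntSys

variable {q ζ ζ' a₁ a₂ b₁ b₂ c₁ c₂ : ℂ}

lemma IntSys.first_clear_denoms (h : IntSys q ζ ζ' a₁ a₂ b₁ b₂ c₁ c₂) (hq : q - q⁻¹ ≠ 0)
    (hζ : ζ ≠ 0) (hζ' : ζ' ≠ 0) :
    ζ' * (ζ ^ 2 - 1) * c₂ + (ζ' ^ 2 - 1) * b₂ = ζ * (ζ' ^ 2 - 1) * a₂ := by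
  have h1 := h.1
  simp only [qbr] at h1
  generalize q - q⁻¹ = D at h1 hq
  field_simp at h1
  linear_combination h1

lemma IntSys.eq_smul_rvec_add_smul_rvec' {x : Fin 6 → ℂ}
    (h : IntSys q ζ ζ' (x 0) (x 1) (x 2) (x 3) (x 4) (x 5)) (hq : q - q⁻¹ ≠ 0) (hζ : ζ ≠ 0)
    (hζ' : ζ' ≠ 0) (hζ2 : 1 - ζ ^ 2 ≠ 0) (hζ'2 : 1 - ζ' ^ 2 ≠ 0) :
    x = (x 4 / (1 - ζ ^ 2)) • rvec ζ ζ' + (x 5 / (1 - ζ' ^ 2)) • rvec' ζ ζ' := by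
  have h1 := h.first_clear_denoms hq hζ hζ'
  obtain ⟨-, -, -, -, h5, -, h7, h8⟩ := h
  have hb₂ : (1 - ζ ^ 2) * (1 - ζ' ^ 2) * x 3 =
      ζ * (1 - ζ' ^ 2) * x 4 - ζ' * (1 - ζ ^ 2) * x 5 := by
    linear_combination -h1 - ζ * (ζ' ^ 2 - 1) * h5
  funext i
  fin_cases i <;>
    simp only [rvec, rvec', Pi.add_apply, Pi.smul_apply, smul_eq_mul, Fin.isValue,
      Fin.reduceFinMk, Fin.zero_eta, Fin.mk_one, cons_val, cons_val_zero, cons_val_one, mul_zero,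
      add_zero, zero_add] <;>
    field_simp
  · linear_combination -(1 - ζ ^ 2) * (1 - ζ' ^ 2) * h7 - ζ' * hb₂
  · linear_combination (1 - ζ ^ 2) * (1 - ζ' ^ 2) * h5 + ζ * hb₂
  · linear_combination (1 - ζ ^ 2) * (1 - ζ' ^ 2) * (h8 + ζ * h7) + ζ * ζ' * hb₂
  · linear_combination hb₂

lemma intSys_smul_rvec_add_smul_rvec' (hζ : ζ ≠ 0) (hζ' : ζ' ≠ 0) (m n : ℂ) :
    let x := m • rvec ζ ζ' + n • rvec' ζ ζ'
    IntSys q ζ ζ' (x 0) (x 1) (x 2) (x 3) (x 4) (x 5) := by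
  simp only [IntSys, qbr, rvec, rvec', Pi.add_apply, Pi.smul_apply, smul_eq_mul, Fin.isValue,
    cons_val, cons_val_zero, cons_val_one]
  generalize q - q⁻¹ = D
  refine ⟨?_, ?_, ?_, ?_, ?_, ?_, ?_, ?_⟩ <;> field_simp <;> ring

end IntSys

lemma linearIndependent_rvec_rvec' {ζ ζ' : ℂ} (hζ2 : 1 - ζ ^ 2 ≠ 0) (hζ'2 : 1 - ζ' ^ 2 ≠ 0) :
    LinearIndependent ℂ ![rvec ζ ζ', rvec' ζ ζ'] := by
  refine LinearIndependent.pair_iff.mpr fun s t h => ⟨?_, ?_⟩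
  · simpa [rvec, rvec', hζ2] using congrFun h 4
  · simpa [rvec, rvec', hζ'2] using congrFun h 5

theorem stmt2 (q ζ ζ' : ℂ) (hq0 : q ≠ 0) (hq4 : q ^ 4 ≠ 1)
    (hζ0 : ζ ≠ 0) (hζ'0 : ζ' ≠ 0)
    (hζ1 : ζ ≠ 1) (hζm1 : ζ ≠ -1) (hζ'1 : ζ' ≠ 1) (hζ'm1 : ζ' ≠ -1) :
    {x : Fin 6 → ℂ | IntSys q ζ ζ' (x 0) (x 1) (x 2) (x 3) (x 4) (x 5)} =
      (Submodule.span ℂ {rvec ζ ζ', rvec' ζ ζ'} : Submodule ℂ (Fin 6 → ℂ)) ∧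
    LinearIndependent ℂ ![rvec ζ ζ', rvec' ζ ζ'] ∧
    Module.finrank ℂ (Submodule.span ℂ {rvec ζ ζ', rvec' ζ ζ'} : Submodule ℂ (Fin 6 → ℂ)) = 2 := by
  have hq : q - q⁻¹ ≠ 0 := sub_inv_ne_zero_of_sq_ne_one hq0 fun h =>
    hq4 (by rw [show q ^ 4 = (q ^ 2) ^ 2 by ring, h, one_pow])
  have hζ2 := one_sub_sq_ne_zero hζ1 hζm1
  have hζ'2 := one_sub_sq_ne_zero hζ'1 hζ'm1
  have hli := linearIndependent_rvec_rvec' hζ2 hζ'2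
  refine ⟨?_, hli, ?_⟩
  · ext x
    rw [Set.mem_ofPred_eq, SetLike.mem_coe, Submodule.mem_span_pair]
    constructor
    · exact fun h => ⟨_, _, (h.eq_smul_rvec_add_smul_rvec' hq hζ0 hζ'0 hζ2 hζ'2).symm⟩
    · rintro ⟨m, n, rfl⟩
      exact intSys_smul_rvec_add_smul_rvec' hζ0 hζ'0 m n
  · rw [← Matrix.range_cons_cons_empty _ _ ![], finrank_span_eq_card hli, Fintype.card_fin]
end

section
/- Let q ∈ ℂ with q ∉ {0, 1, −1}, and let ζ, ζ' ∈ ℂ× with ζ, ζ', ζζ' ∉ {1, −1}. Let φ be an endomorphism of ℂ²⊗ℂ² of the grading-preserving form φ(e₀⊗e₀) = a₂ e₀⊗e₀ + d₁ e₁⊗e₁, φ(e₀⊗e₁) = c₂ e₀⊗e₁ + b₂ e₁⊗e₀, φ(e₁⊗e₀) = b₁ e₀⊗e₁ + c₁ e₁⊗e₀, φ(e₁⊗e₁) = d₂ e₀⊗e₀ + a₁ e₁⊗e₁ for some complex numbers a₁, a₂, b₁, b₂, c₁, c₂, d₁, d₂. If φ∘E(ζ,ζ') = E(ζ',ζ)∘φ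 and φ∘F(ζ,ζ') = F(ζ',ζ)∘φ, then d₁ = d₂ = 0 and there exist u, v ∈ ℂ with φ = u·R(ζ,ζ') + v·R'(ζ,ζ'). -/
open Matrix

/-- The R-matrix `R(ζ,ζ')`. -/
def Rmat (ζ ζ' : ℂ) : Matrix (Fin 4) (Fin 4) ℂ :=
  Mmat (-(ζ * ζ')) 1 ζ' ζ (1 - ζ ^ 2) 0

/-- The R-matrix `R'(ζ,ζ')`. -/
def Rmat' (ζ ζ' : ℂ) : Matrix (Fin 4) (Fin 4) ℂ :=
  Mmat 1 (-(ζ * ζ')) (-ζ) (-ζ') 0 (1 - ζ' ^ 2)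

/-!
The intertwining relations are linear in the eight weights. The `F`-relations give `d₂ = 0` and
express `a₁, a₂, b₁` through `b₂, c₁, c₂`; the `(3,1)` entry of the `E`-relation reads
`d₁ [ζ'] = 0`, and its `(0,1)` entry determines `b₂` from `c₁, c₂` when `ζ², ζ'² ≠ 1`. So `φ` is
fixed by `(c₁, c₂)`, and it agrees with `u • R(ζ,ζ') + v • R'(ζ,ζ')` for `c₁ = u (1 - ζ²)`,
`c₂ = v (1 - ζ'²)`.
-/

theorem sub_inv_ne_zero {K : Type*} [Field K] {x : K} (h0 : x ≠ 0) (hsq : x ^ 2 ≠ 1) :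
    x - x⁻¹ ≠ 0 := by
  rw [← mul_ne_zero_iff_right h0, sub_mul, inv_mul_cancel₀ h0, ← sq]
  exact sub_ne_zero.2 hsq

theorem qbr_eq (q x : ℂ) : qbr q x = (x ^ 2 - 1) / (x * (q - q⁻¹)) := by
  rcases eq_or_ne x 0 with rfl | hx
  · simp [qbr]
  · rw [qbr, mul_comm x, ← div_div, div_right_comm]
    congr 1
    field_simp

def evenMat (a₁ a₂ b₁ b₂ c₁ c₂ d₁ d₂ : ℂ) : Matrix (Fin 4) (Fin 4) ℂ :=
  !![a₂, 0,  0,  d₂;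
     0,  c₂, b₁, 0;
     0,  b₂, c₁, 0;
     d₁, 0,  0,  a₁]

theorem smul_Rmat_add_smul_Rmat' (u v ζ ζ' : ℂ) :
    u • Rmat ζ ζ' + v • Rmat' ζ ζ' =
      Mmat (v - u * (ζ * ζ')) (u - v * (ζ * ζ')) (u * ζ' - v * ζ) (u * ζ - v * ζ')
        (u * (1 - ζ ^ 2)) (v * (1 - ζ' ^ 2)) := by
  ext i j
  fin_cases i <;> fin_cases j <;> simp [Rmat, Rmat', Mmat] <;> ring

section Intertwiner

variable {q ζ ζ' a₁ a₂ b₁ b₂ c₁ c₂ d₁ d₂ : ℂ}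

theorem eqns_of_mul_Fmat_eq
    (h : evenMat a₁ a₂ b₁ b₂ c₁ c₂ d₁ d₂ * Fmat ζ ζ' = Fmat ζ' ζ * evenMat a₁ a₂ b₁ b₂ c₁ c₂ d₁ d₂) :
    d₂ = 0 ∧ a₂ = ζ * b₂ + c₁ ∧ ζ' * a₂ = ζ * c₂ + b₁ ∧ a₁ = c₂ - ζ' * b₂ := by
  have h01 := congrFun (congrFun h 0) 1
  have h10 := congrFun (congrFun h 1) 0
  have h20 := congrFun (congrFun h 2) 0
  have h31 := congrFun (congrFun h 3) 1
  simp only [evenMat, Fmat, Fin.isValue, mul_apply, of_apply, cons_val', cons_val_fin_one,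
    cons_val_zero, cons_val_one, Fin.sum_univ_four, mul_zero, add_zero, cons_val, mul_one, zero_add,
    zero_mul, one_mul, neg_mul] at h01 h10 h20 h31
  exact ⟨h01, by linear_combination -h20, by linear_combination -h10, by linear_combination h31⟩

theorem eqns_of_mul_Emat_eq (hq : q - q⁻¹ ≠ 0) (hζ : ζ ≠ 0) (hζ'0 : ζ' ≠ 0) (hζ'sq : ζ' ^ 2 ≠ 1)
    (h : evenMat a₁ a₂ b₁ b₂ c₁ c₂ d₁ d₂ * Emat q ζ ζ' = Emat q ζ' ζ * evenMat a₁ a₂ b₁ b₂ c₁ c₂ d₁ d₂) :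
    d₁ = 0 ∧ ζ * (ζ' ^ 2 - 1) * a₂ = ζ' * (ζ ^ 2 - 1) * c₂ + (ζ' ^ 2 - 1) * b₂ := by
  have h01 := congrFun (congrFun h 0) 1
  have h31 := congrFun (congrFun h 3) 1
  simp only [evenMat, Emat, qbr_eq, Fin.isValue, mul_apply, of_apply, cons_val', cons_val_fin_one,
    cons_val_zero, cons_val_one, Fin.sum_univ_four, mul_zero, add_zero, cons_val, zero_add, zero_mul,
    mul_eq_zero, div_eq_zero_iff] at h01 h31
  refine ⟨by simpa [hq, hζ'0, sub_eq_zero, hζ'sq] using h31, ?_⟩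
  generalize q - q⁻¹ = D at *
  field_simp at h01
  linear_combination h01

theorem exists_Mmat_eq_smul_Rmat_add_smul_Rmat' (hζ : ζ ^ 2 ≠ 1) (hζ' : ζ' ^ 2 ≠ 1)
    (ha₂ : a₂ = ζ * b₂ + c₁) (hb₁ : ζ' * a₂ = ζ * c₂ + b₁) (ha₁ : a₁ = c₂ - ζ' * b₂)
    (hb₂ : ζ * (ζ' ^ 2 - 1) * a₂ = ζ' * (ζ ^ 2 - 1) * c₂ + (ζ' ^ 2 - 1) * b₂) :
    ∃ u v : ℂ, Mmat a₁ a₂ b₁ b₂ c₁ c₂ = u • Rmat ζ ζ' + v • Rmat' ζ ζ' := by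
  have hX : 1 - ζ ^ 2 ≠ 0 := sub_ne_zero.2 hζ.symm
  have hY : 1 - ζ' ^ 2 ≠ 0 := sub_ne_zero.2 hζ'.symm
  obtain ⟨u, rfl⟩ : ∃ u, c₁ = u * (1 - ζ ^ 2) := ⟨c₁ / (1 - ζ ^ 2), (div_mul_cancel₀ c₁ hX).symm⟩
  obtain ⟨v, rfl⟩ : ∃ v, c₂ = v * (1 - ζ' ^ 2) := ⟨c₂ / (1 - ζ' ^ 2), (div_mul_cancel₀ c₂ hY).symm⟩
  have hb₂' : b₂ = u * ζ - v * ζ' := by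
    refine mul_left_cancel₀ (mul_ne_zero hX hY) ?_
    linear_combination hb₂ - ζ * (ζ' ^ 2 - 1) * ha₂
  refine ⟨u, v, ?_⟩
  rw [smul_Rmat_add_smul_Rmat']
  congr 1
  · linear_combination ha₁ - ζ' * hb₂'
  · linear_combination ha₂ + ζ * hb₂'
  · linear_combination ζ' * ha₂ - hb₁ + ζ * ζ' * hb₂'

end Intertwiner

theorem stmt3_general (q ζ ζ' : ℂ) (hq0 : q ≠ 0) (hq1 : q ≠ 1) (hqm1 : q ≠ -1)
    (hζ0 : ζ ≠ 0) (hζ'0 : ζ' ≠ 0)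
    (hζ1 : ζ ≠ 1) (hζm1 : ζ ≠ -1) (hζ'1 : ζ' ≠ 1) (hζ'm1 : ζ' ≠ -1)
    (a₁ a₂ b₁ b₂ c₁ c₂ d₁ d₂ : ℂ)
    (φ : Matrix (Fin 4) (Fin 4) ℂ)
    (hφ : φ = !![a₂, 0,  0,  d₂;
                 0,  c₂, b₁, 0;
                 0,  b₂, c₁, 0;
                 d₁, 0,  0,  a₁])
    (hE : φ * Emat q ζ ζ' = Emat q ζ' ζ * φ)
    (hF : φ * Fmat ζ ζ' = Fmat ζ' ζ * φ) :
    d₁ = 0 ∧ d₂ = 0 ∧ ∃ u v : ℂ, φ = u • Rmat ζ ζ' + v • Rmat' ζ ζ' := by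
  subst hφ
  have hζsq : ζ ^ 2 ≠ 1 := sq_ne_one_iff.2 ⟨hζ1, hζm1⟩
  have hζ'sq : ζ' ^ 2 ≠ 1 := sq_ne_one_iff.2 ⟨hζ'1, hζ'm1⟩
  have hq : q - q⁻¹ ≠ 0 := sub_inv_ne_zero hq0 (sq_ne_one_iff.2 ⟨hq1, hqm1⟩)
  obtain ⟨rfl, ha₂, hb₁, ha₁⟩ := eqns_of_mul_Fmat_eq hF
  obtain ⟨rfl, hb₂⟩ := eqns_of_mul_Emat_eq hq hζ0 hζ'0 hζ'sq hE
  exact ⟨rfl, rfl, exists_Mmat_eq_smul_Rmat_add_smul_Rmat' hζsq hζ'sq ha₂ hb₁ ha₁ hb₂⟩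

theorem stmt3 (q ζ ζ' : ℂ) (hq0 : q ≠ 0) (hq1 : q ≠ 1) (hqm1 : q ≠ -1)
    (hζ0 : ζ ≠ 0) (hζ'0 : ζ' ≠ 0)
    (hζ1 : ζ ≠ 1) (hζm1 : ζ ≠ -1) (hζ'1 : ζ' ≠ 1) (hζ'm1 : ζ' ≠ -1)
    (hζζ'1 : ζ * ζ' ≠ 1) (hζζ'm1 : ζ * ζ' ≠ -1)
    (a₁ a₂ b₁ b₂ c₁ c₂ d₁ d₂ : ℂ)
    (φ : Matrix (Fin 4) (Fin 4) ℂ)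
    (hφ : φ = !![a₂, 0,  0,  d₂;
                 0,  c₂, b₁, 0;
                 0,  b₂, c₁, 0;
                 d₁, 0,  0,  a₁])
    (hE : φ * Emat q ζ ζ' = Emat q ζ' ζ * φ)
    (hF : φ * Fmat ζ ζ' = Fmat ζ' ζ * φ) :
    d₁ = 0 ∧ d₂ = 0 ∧ ∃ u v : ℂ, φ = u • Rmat ζ ζ' + v • Rmat' ζ ζ' :=
  stmt3_general q ζ ζ' hq0 hq1 hqm1 hζ0 hζ'0 hζ1 hζm1 hζ'1 hζ'm1 a₁ a₂ b₁ b₂ c₁ c₂ d₁ d₂ φ hφ hE hF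
end

section
/- For every ζ ∈ ℂ, both A = R(ζ,ζ) and A = R'(ζ,ζ) satisfy A² + (ζ² − 1)·A − ζ²·Id = 0 on ℂ²⊗ℂ²; moreover the characteristic polynomial of each of R(ζ,ζ) and R'(ζ,ζ) is (X − 1)²(X + ζ²)², so each has eigenvalues 1 and −ζ², each with multiplicity 2. -/
open Matrix

/-! In the basis `e₀⊗e₀, e₀⊗e₁, e₁⊗e₀, e₁⊗e₁` the matrix `Mmat` is block diagonal,
`a₂ ⊕ [[c₂, b₁], [b₂, c₁]] ⊕ a₁`. For `R(ζ,ζ)` and `R'(ζ,ζ)` the middle block has trace `1 - ζ²`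
and determinant `-ζ²`, so by Cayley–Hamilton it is annihilated by `(X - 1)(X + ζ²)`, as are the
two corner entries `1` and `-ζ²`; the characteristic polynomial is the product of the three blocks'. -/

open Polynomial

theorem Mmat_charpoly (a₁ a₂ b₁ b₂ c₁ c₂ : ℂ) :
    (Mmat a₁ a₂ b₁ b₂ c₁ c₂).charpoly =
      (X - C a₂) * (X - C a₁) * (X ^ 2 - C (c₁ + c₂) * X + C (c₁ * c₂ - b₁ * b₂)) := by
  rw [Matrix.charpoly, Matrix.det_succ_row_zero]
  simp [Fin.sum_univ_succ, Matrix.det_fin_three, Mmat, charmatrix_apply, Fin.succAbove]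
  ring

theorem Mmat_sq_sub_smul_add_smul_eq_zero {a₁ a₂ b₁ b₂ c₁ c₂ s p : ℂ}
    (ha₁ : a₁ ^ 2 - s * a₁ + p = 0) (ha₂ : a₂ ^ 2 - s * a₂ + p = 0)
    (h_trace : c₁ + c₂ = s) (h_det : c₁ * c₂ - b₁ * b₂ = p) :
    Mmat a₁ a₂ b₁ b₂ c₁ c₂ ^ 2 - s • Mmat a₁ a₂ b₁ b₂ c₁ c₂ + p • 1 = 0 := by
  subst h_trace h_det
  rw [sq] at ha₁ ha₂
  ext i j
  fin_cases i <;> fin_cases j <;> simp [Mmat, sq, ha₁, ha₂] <;> ring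

theorem stmt6 (ζ : ℂ) :
    (Rmat ζ ζ ^ 2 + (ζ ^ 2 - 1) • Rmat ζ ζ - (ζ ^ 2) • (1 : Matrix (Fin 4) (Fin 4) ℂ) = 0) ∧
    (Rmat' ζ ζ ^ 2 + (ζ ^ 2 - 1) • Rmat' ζ ζ - (ζ ^ 2) • (1 : Matrix (Fin 4) (Fin 4) ℂ) = 0) ∧
    (Rmat ζ ζ).charpoly =
      (Polynomial.X - 1) ^ 2 * (Polynomial.X + Polynomial.C (ζ ^ 2)) ^ 2 ∧
    (Rmat' ζ ζ).charpoly =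
      (Polynomial.X - 1) ^ 2 * (Polynomial.X + Polynomial.C (ζ ^ 2)) ^ 2 := by
  have hR : Rmat ζ ζ ^ 2 - (1 - ζ ^ 2) • Rmat ζ ζ + (-ζ ^ 2) • 1 = 0 :=
    Mmat_sq_sub_smul_add_smul_eq_zero (by ring) (by ring) (by ring) (by ring)
  have hR' : Rmat' ζ ζ ^ 2 - (1 - ζ ^ 2) • Rmat' ζ ζ + (-ζ ^ 2) • 1 = 0 :=
    Mmat_sq_sub_smul_add_smul_eq_zero (by ring) (by ring) (by ring) (by ring)
  refine ⟨?_, ?_, ?_, ?_⟩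
  · linear_combination (norm := module) hR
  · linear_combination (norm := module) hR'
  · rw [Rmat, Mmat_charpoly]
    simp only [map_add, map_sub, map_mul, map_neg, map_one, map_zero, map_pow]
    ring
  · rw [Rmat', Mmat_charpoly]
    simp only [map_add, map_sub, map_mul, map_neg, map_one, map_zero, map_pow]
    ring
end

section
/- For every ζ ∈ ℂ one has R(ζ,ζ)² + R'(ζ,ζ)² = (1 + ζ⁴) · Id on ℂ²⊗ℂ². -/
open Matrix

/-! Matrices of the shape `Mmat` are closed under sums and products, which act on the six
weights by explicit polynomial formulas; the identity thus reduces to six polynomial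
identities in `ζ`. -/

theorem Mmat_mul (a₁ a₂ b₁ b₂ c₁ c₂ a₁' a₂' b₁' b₂' c₁' c₂' : ℂ) :
    Mmat a₁ a₂ b₁ b₂ c₁ c₂ * Mmat a₁' a₂' b₁' b₂' c₁' c₂' =
      Mmat (a₁ * a₁') (a₂ * a₂') (c₂ * b₁' + b₁ * c₁') (b₂ * c₂' + c₁ * b₂')
        (b₂ * b₁' + c₁ * c₁') (c₂ * c₂' + b₁ * b₂') := by
  ext i j
  fin_cases i <;> fin_cases j <;> simp [Mmat, Matrix.mul_apply, Fin.sum_univ_four]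

theorem Mmat_add (a₁ a₂ b₁ b₂ c₁ c₂ a₁' a₂' b₁' b₂' c₁' c₂' : ℂ) :
    Mmat a₁ a₂ b₁ b₂ c₁ c₂ + Mmat a₁' a₂' b₁' b₂' c₁' c₂' =
      Mmat (a₁ + a₁') (a₂ + a₂') (b₁ + b₁') (b₂ + b₂') (c₁ + c₁') (c₂ + c₂') := by
  ext i j
  fin_cases i <;> fin_cases j <;> simp [Mmat]

theorem smul_one_eq_Mmat (c : ℂ) : c • (1 : Matrix (Fin 4) (Fin 4) ℂ) = Mmat c c 0 0 c c := by
  ext i j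
  fin_cases i <;> fin_cases j <;> simp [Mmat]

theorem stmt7 (ζ : ℂ) :
    Rmat ζ ζ ^ 2 + Rmat' ζ ζ ^ 2 = (1 + ζ ^ 4) • (1 : Matrix (Fin 4) (Fin 4) ℂ) := by
  simp only [Rmat, Rmat', sq, Mmat_mul, Mmat_add, smul_one_eq_Mmat]
  congr 1 <;> ring
end

section
/- For all u, v, ζ, ζ' ∈ ℂ, setting a₁ := v − uζζ', a₂ := u − vζζ', b₁ := uζ' − vζ, b₂ := uζ − vζ', c₁ := u(1 − ζ²), c₂ := v(1 − (ζ')²), the cubic relation b₂³ + a₁b₁c₁ + a₂b₂c₁ + a₂b₁c₂ + a₁b₂c₂ = 2a₁a₂b₁ + (a₁² + a₂² + b₁²)b₂ holds. -/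
theorem stmt9 (u v ζ ζ' : ℂ)
    (a₁ a₂ b₁ b₂ c₁ c₂ : ℂ)
    (ha₁ : a₁ = v - u * ζ * ζ') (ha₂ : a₂ = u - v * ζ * ζ')
    (hb₁ : b₁ = u * ζ' - v * ζ) (hb₂ : b₂ = u * ζ - v * ζ')
    (hc₁ : c₁ = u * (1 - ζ ^ 2)) (hc₂ : c₂ = v * (1 - ζ' ^ 2)) :
    b₂ ^ 3 + a₁ * b₁ * c₁ + a₂ * b₂ * c₁ + a₂ * b₁ * c₂ + a₁ * b₂ * c₂ =
      2 * a₁ * a₂ * b₁ + (a₁ ^ 2 + a₂ ^ 2 + b₁ ^ 2) * b₂ := by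
  subst ha₁ ha₂ hb₁ hb₂ hc₁ hc₂
  ring
end

section
/- Let ζ, ζ', ζ'' ∈ ℂ× with ζ, ζ', ζ'' ∉ {1, −1}. Then the Yang–Baxter equation (R(ζ',ζ'')⊗I) ∘ (I⊗R(ζ,ζ'')) ∘ (R(ζ,ζ')⊗I) = (I⊗R(ζ,ζ')) ∘ (R(ζ,ζ'')⊗I) ∘ (I⊗R(ζ',ζ'')) holds as an identity of endomorphisms of ℂ²⊗ℂ²⊗ℂ². -/
/-! Written out in the basis of `ℂ²⊗ℂ²⊗ℂ²`, `A ⊗ I` and `I ⊗ A` of a six-vertex matrix `A` are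
sparse `8 × 8` matrices carrying the same six weights, so both sides of the Yang–Baxter equation
multiply out to explicit matrices whose entries agree as polynomials in `ζ, ζ', ζ''`. -/

open Matrix

/-- `A ⊗ I` : the Kronecker product of a `4×4` matrix (acting on the first two tensor
factors of `ℂ²⊗ℂ²⊗ℂ²`) with the `2×2` identity, indexed by `Fin 8`
(basis index `i ↔ e_{i/4} ⊗ e_{(i/2)%2} ⊗ e_{i%2}`). -/
def tenL (A : Matrix (Fin 4) (Fin 4) ℂ) : Matrix (Fin 8) (Fin 8) ℂ :=
  Matrix.of fun i j =>
    A ⟨i.val / 2, by have := i.isLt; omega⟩ ⟨j.val / 2, by have := j.isLt; omega⟩ *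
      (if i.val % 2 = j.val % 2 then 1 else 0)

/-- `I ⊗ A` : the Kronecker product of the `2×2` identity with a `4×4` matrix acting on
the last two tensor factors of `ℂ²⊗ℂ²⊗ℂ²`, indexed by `Fin 8`. -/
def tenR (A : Matrix (Fin 4) (Fin 4) ℂ) : Matrix (Fin 8) (Fin 8) ℂ :=
  Matrix.of fun i j =>
    (if i.val / 4 = j.val / 4 then 1 else 0) *
      A ⟨i.val % 4, by have := i.isLt; omega⟩ ⟨j.val % 4, by have := j.isLt; omega⟩


lemma tenL_Mmat (a₁ a₂ b₁ b₂ c₁ c₂ : ℂ) :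
    tenL (Mmat a₁ a₂ b₁ b₂ c₁ c₂) =
      !![a₂, 0,  0,  0,  0,  0,  0,  0;
         0,  a₂, 0,  0,  0,  0,  0,  0;
         0,  0,  c₂, 0,  b₁, 0,  0,  0;
         0,  0,  0,  c₂, 0,  b₁, 0,  0;
         0,  0,  b₂, 0,  c₁, 0,  0,  0;
         0,  0,  0,  b₂, 0,  c₁, 0,  0;
         0,  0,  0,  0,  0,  0,  a₁, 0;
         0,  0,  0,  0,  0,  0,  0,  a₁] := by
  ext i j
  fin_cases i <;> fin_cases j <;> simp [tenL, Mmat]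

lemma tenR_Mmat (a₁ a₂ b₁ b₂ c₁ c₂ : ℂ) :
    tenR (Mmat a₁ a₂ b₁ b₂ c₁ c₂) =
      !![a₂, 0,  0,  0,  0,  0,  0,  0;
         0,  c₂, b₁, 0,  0,  0,  0,  0;
         0,  b₂, c₁, 0,  0,  0,  0,  0;
         0,  0,  0,  a₁, 0,  0,  0,  0;
         0,  0,  0,  0,  a₂, 0,  0,  0;
         0,  0,  0,  0,  0,  c₂, b₁, 0;
         0,  0,  0,  0,  0,  b₂, c₁, 0;
         0,  0,  0,  0,  0,  0,  0,  a₁] := by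
  ext i j
  fin_cases i <;> fin_cases j <;> simp [tenR, Mmat]

theorem stmt10_general (ζ ζ' ζ'' : ℂ) :
    tenL (Rmat ζ' ζ'') * tenR (Rmat ζ ζ'') * tenL (Rmat ζ ζ') =
      tenR (Rmat ζ ζ') * tenL (Rmat ζ ζ'') * tenR (Rmat ζ' ζ'') := by
  simp only [Rmat, tenL_Mmat, tenR_Mmat, cons_mul, Nat.succ_eq_add_one, Nat.reduceAdd, vecMul_cons,
    head_cons, one_smul, tail_cons, zero_smul, empty_vecMul, add_zero, zero_add, smul_cons,
    smul_eq_mul, mul_zero, mul_one, smul_empty, add_cons, empty_add_empty, mul_neg, neg_smul,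
    neg_cons, neg_zero, neg_empty, neg_neg, empty_mul, Equiv.symm_apply_apply,
    EmbeddingLike.apply_eq_iff_eq, vecCons_inj, and_true, true_and, neg_inj]
  and_intros <;> ring

theorem stmt10 (ζ ζ' ζ'' : ℂ) (hζ0 : ζ ≠ 0) (hζ'0 : ζ' ≠ 0) (hζ''0 : ζ'' ≠ 0)
    (hζ1 : ζ ≠ 1) (hζm1 : ζ ≠ -1) (hζ'1 : ζ' ≠ 1) (hζ'm1 : ζ' ≠ -1)
    (hζ''1 : ζ'' ≠ 1) (hζ''m1 : ζ'' ≠ -1) :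
    tenL (Rmat ζ' ζ'') * tenR (Rmat ζ ζ'') * tenL (Rmat ζ ζ') =
      tenR (Rmat ζ ζ') * tenL (Rmat ζ ζ'') * tenR (Rmat ζ' ζ'') :=
  stmt10_general ζ ζ' ζ''
end

section
/- Let ζ, ζ', ζ'' ∈ ℂ× with ζ, ζ', ζ'' ∉ {1, −1}. Then the Yang–Baxter equation (R'(ζ',ζ'')⊗I) ∘ (I⊗R'(ζ,ζ'')) ∘ (R'(ζ,ζ')⊗I) = (I⊗R'(ζ,ζ')) ∘ (R'(ζ,ζ'')⊗I) ∘ (I⊗R'(ζ',ζ'')) holds as an identity of endomorphisms of ℂ²⊗ℂ²⊗ℂ². -/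
open Matrix

theorem stmt11_general (ζ ζ' ζ'' : ℂ) :
    tenL (Rmat' ζ' ζ'') * tenR (Rmat' ζ ζ'') * tenL (Rmat' ζ ζ') =
      tenR (Rmat' ζ ζ') * tenL (Rmat' ζ ζ'') * tenR (Rmat' ζ' ζ'') := by
  simp only [Rmat', tenL_Mmat, tenR_Mmat]
  ext i j
  fin_cases i <;> fin_cases j <;>
    simp only [Matrix.mul_apply, Fin.sum_univ_eight, Matrix.of_apply, Matrix.cons_val,
      Fin.zero_eta, Fin.mk_one, Fin.reduceFinMk, mul_zero, zero_mul, add_zero, zero_add] <;>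
    ring

theorem stmt11 (ζ ζ' ζ'' : ℂ) (hζ0 : ζ ≠ 0) (hζ'0 : ζ' ≠ 0) (hζ''0 : ζ'' ≠ 0)
    (hζ1 : ζ ≠ 1) (hζm1 : ζ ≠ -1) (hζ'1 : ζ' ≠ 1) (hζ'm1 : ζ' ≠ -1)
    (hζ''1 : ζ'' ≠ 1) (hζ''m1 : ζ'' ≠ -1) :
    tenL (Rmat' ζ' ζ'') * tenR (Rmat' ζ ζ'') * tenL (Rmat' ζ ζ') =
      tenR (Rmat' ζ ζ') * tenL (Rmat' ζ ζ'') * tenR (Rmat' ζ' ζ'') :=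
  stmt11_general ζ ζ' ζ''
end

section
/- Let q ∈ ℂ× and z₁, z₂ ∈ ℂ. For every choice of X, Y ∈ {Γ, Δ}, the RTT Yang–Baxter equation (T_Y(z₂)⊗I) ∘ (I⊗T_X(z₁)) ∘ (R_{XY}(z₁,z₂)⊗I) = (I⊗R_{XY}(z₁,z₂)) ∘ (T_X(z₁)⊗I) ∘ (I⊗T_Y(z₂)) holds as an identity of endomorphisms of ℂ²⊗ℂ²⊗ℂ² (four equations in total, one for each pair (X,Y)). -/
/-!
All three factors conserve the number of `e₁`'s (the ice rule of the six-vertex model), so both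
sides of the Yang–Baxter equation are block diagonal along that grading, and comparing entries
reduces the equation to thirteen cubic identities in the Boltzmann weights of the three factors
(Baxter's star–triangle relations). For the Tokuyama weights these are polynomial identities in
`q`, `q⁻¹`, `z₁`, `z₂`.
-/

open Matrix

/-- Γ Tokuyama T-weights (deformation parameter `v = q²`). -/
noncomputable def TG (q z : ℂ) : Matrix (Fin 4) (Fin 4) ℂ :=
  Mmat 1 z (-q) (q * z) ((1 - q ^ 2) * z) 1

/-- Δ Tokuyama T-weights (deformation parameter `v = q²`). -/
noncomputable def TD (q z : ℂ) : Matrix (Fin 4) (Fin 4) ℂ :=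
  Mmat 1 (-(q ^ 2 * z)) q⁻¹ (q * z) ((1 - q ^ 2) * z) 1

/-- ΓΓ Tokuyama R-weights. -/
noncomputable def RGG (q z₁ z₂ : ℂ) : Matrix (Fin 4) (Fin 4) ℂ :=
  Mmat (z₂ - q ^ 2 * z₁) (z₁ - q ^ 2 * z₂) (q * (z₁ - z₂)) (q * (z₁ - z₂))
    ((1 - q ^ 2) * z₁) ((1 - q ^ 2) * z₂)

/-- ΔΔ Tokuyama R-weights. -/
noncomputable def RDD (q z₁ z₂ : ℂ) : Matrix (Fin 4) (Fin 4) ℂ :=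
  Mmat (z₁ - q ^ 2 * z₂) (z₂ - q ^ 2 * z₁) (q * (z₁ - z₂)) (q * (z₁ - z₂))
    ((1 - q ^ 2) * z₁) ((1 - q ^ 2) * z₂)

/-- ΓΔ Tokuyama R-weights. -/
noncomputable def RGD (q z₁ z₂ : ℂ) : Matrix (Fin 4) (Fin 4) ℂ :=
  Mmat (z₁ - q ^ 2 * z₂) (z₁ - q ^ 2 * z₂) (q⁻¹ * (q ^ 4 * z₂ - z₁)) (q * (z₁ - z₂))
    ((1 - q ^ 2) * z₁) ((1 - q ^ 2) * z₂)

/-- ΔΓ Tokuyama R-weights. -/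
noncomputable def RDG (q z₁ z₂ : ℂ) : Matrix (Fin 4) (Fin 4) ℂ :=
  Mmat (z₂ - q ^ 2 * z₁) (z₂ - q ^ 2 * z₁) (q⁻¹ * (z₂ - q ^ 4 * z₁)) (q * (z₁ - z₂))
    ((1 - q ^ 2) * z₁) ((1 - q ^ 2) * z₂)

/-- The Tokuyama T-weights indexed by type `X ∈ {Γ, Δ}` (`true = Γ`, `false = Δ`). -/
noncomputable def Ttok (q : ℂ) : Bool → ℂ → Matrix (Fin 4) (Fin 4) ℂ
  | true => TG q
  | false => TD q

/-- The Tokuyama R-weights indexed by types `X, Y ∈ {Γ, Δ}` (`true = Γ`, `false = Δ`). -/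
noncomputable def Rtok (q : ℂ) : Bool → Bool → ℂ → ℂ → Matrix (Fin 4) (Fin 4) ℂ
  | true, true => RGG q
  | false, false => RDD q
  | true, false => RGD q
  | false, true => RDG q

theorem tenL_Mmat_mul_tenR_Mmat_mul_tenL_Mmat
    {sa₁ sa₂ sb₁ sb₂ sc₁ sc₂ ta₁ ta₂ tb₁ tb₂ tc₁ tc₂ ra₁ ra₂ rb₁ rb₂ rc₁ rc₂ : ℂ}
    (h₁ : sa₂ * tc₂ * ra₂ = sb₂ * tc₂ * rb₁ + sc₂ * ta₂ * rc₂)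
    (h₂ : sa₂ * tb₁ * rc₂ = sc₁ * tc₂ * rb₁ + sb₁ * ta₂ * rc₂)
    (h₃ : sc₂ * tb₂ * ra₂ = sc₂ * ta₂ * rb₂ + sb₂ * tc₂ * rc₁)
    (h₄ : sc₂ * tc₁ * rc₂ = sc₁ * tc₂ * rc₁)
    (h₅ : sc₂ * tc₁ * rb₁ + sb₁ * ta₂ * rc₁ = sa₂ * tb₁ * rc₁)
    (h₆ : sb₁ * tc₂ * rb₂ + sc₂ * ta₁ * rc₂ = sa₁ * tc₂ * ra₁)
    (h₇ : sc₂ * ta₁ * rb₁ + sb₁ * tc₂ * rc₁ = sc₂ * tb₁ * ra₁)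
    (h₈ : sc₁ * ta₂ * rb₂ + sb₂ * tc₁ * rc₂ = sc₁ * tb₂ * ra₂)
    (h₉ : sb₂ * tc₁ * rb₁ + sc₁ * ta₂ * rc₁ = sa₂ * tc₁ * ra₂)
    (h₁₀ : sc₁ * tc₂ * rb₂ + sb₂ * ta₁ * rc₂ = sa₁ * tb₂ * rc₂)
    (h₁₁ : sc₁ * tb₁ * ra₁ = sc₁ * ta₁ * rb₁ + sb₁ * tc₁ * rc₂)
    (h₁₂ : sa₁ * tb₂ * rc₁ = sc₂ * tc₁ * rb₂ + sb₂ * ta₁ * rc₁)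
    (h₁₃ : sa₁ * tc₁ * ra₁ = sb₁ * tc₁ * rb₂ + sc₁ * ta₁ * rc₁) :
    tenL (Mmat sa₁ sa₂ sb₁ sb₂ sc₁ sc₂) * tenR (Mmat ta₁ ta₂ tb₁ tb₂ tc₁ tc₂) *
        tenL (Mmat ra₁ ra₂ rb₁ rb₂ rc₁ rc₂) =
      tenR (Mmat ra₁ ra₂ rb₁ rb₂ rc₁ rc₂) * tenL (Mmat ta₁ ta₂ tb₁ tb₂ tc₁ tc₂) *
        tenR (Mmat sa₁ sa₂ sb₁ sb₂ sc₁ sc₂) := by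
  simp only [tenL_Mmat, tenR_Mmat, cons_mul, Nat.succ_eq_add_one, Nat.reduceAdd, vecMul_cons,
    head_cons, smul_cons, smul_eq_mul, mul_zero, smul_empty, tail_cons, zero_smul, empty_vecMul,
    add_zero, zero_add, add_cons, empty_add_empty, empty_mul, Equiv.symm_apply_apply,
    EmbeddingLike.apply_eq_iff_eq, vecCons_inj, and_true, true_and]
  and_intros <;> grind

theorem stmt15 (q z₁ z₂ : ℂ) (hq : q ≠ 0) :
    ∀ X Y : Bool,
      tenL (Ttok q Y z₂) * tenR (Ttok q X z₁) * tenL (Rtok q X Y z₁ z₂) =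
        tenR (Rtok q X Y z₁ z₂) * tenL (Ttok q X z₁) * tenR (Ttok q Y z₂) := by
  intro X Y
  cases X <;> cases Y <;>
    · apply tenL_Mmat_mul_tenR_Mmat_mul_tenL_Mmat <;> field_simp <;> ring
end

section
/- Let q, z ∈ ℂ with q ≠ 0 and z ≠ 0. Then the matrix-valued function c ↦ (zq)·R^Γ_{c,q}((zq)⁻¹) converges, as c → 0 in ℂ, to the 4×4 matrix G(q,z) := [[−1,0,0,0],[0,−q,(1−q²)z,0],[0,1,qz,0],[0,0,0,z]]. Moreover, the matrix obtained from G(q,z) by negating its (1,1)-entry is exactly the matrix of Γ Tokuyama ice Boltzmann weights (a₁,a₂,b₁,b₂,c₁,c₂) = (1, z, −q, qz, (1−q²)z, 1) with v = q², arranged with diagonal (a₁, b₁, b₂, a₂) and with c₁ in position (2,3) and c₂ in position (3,2). -/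
open Matrix Filter

/-- The R-matrix `R^Γ_{c,q}(z)` (a change-of-variables form of the R-matrix coming from the
`U_q(ĝl(1|1))`-representation `π_{c,c⁻¹}`). -/
noncomputable def RGam (c q z : ℂ) : Matrix (Fin 4) (Fin 4) ℂ :=
  !![c - z, 0,               0,           0;
     0,     c * q⁻¹ - z * q, q⁻¹ - q,     0;
     0,     (1 - c ^ 2) * z, 1 - z * c,   0;
     0,     0,               0,           q⁻¹ - z * c * q]

/-- The limiting matrix `G(q,z)`. -/
noncomputable def Glim (q z : ℂ) : Matrix (Fin 4) (Fin 4) ℂ :=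
  !![-1, 0,  0,             0;
     0,  -q, (1 - q ^ 2) * z, 0;
     0,  1,  q * z,         0;
     0,  0,  0,             z]

/-- Negate the `(1,1)`-entry (index `(0,0)`) of a `4×4` matrix. -/
def negEntry00 (A : Matrix (Fin 4) (Fin 4) ℂ) : Matrix (Fin 4) (Fin 4) ℂ :=
  Matrix.of fun i j => if i = 0 ∧ j = 0 then -(A i j) else A i j

/-- The matrix of Γ Tokuyama ice Boltzmann weights `(a₁,a₂,b₁,b₂,c₁,c₂)`, arranged with
diagonal `(a₁, b₁, b₂, a₂)`, `c₁` in position `(2,3)` and `c₂` in position `(3,2)`. -/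
def wtMat (a₁ a₂ b₁ b₂ c₁ c₂ : ℂ) : Matrix (Fin 4) (Fin 4) ℂ :=
  !![a₁, 0,  0,  0;
     0,  b₁, c₁, 0;
     0,  c₂, b₂, 0;
     0,  0,  0,  a₂]

theorem continuous_RGam (q z : ℂ) : Continuous fun c : ℂ => RGam c q z := by
  refine continuous_matrix fun i j => ?_
  fin_cases i <;> fin_cases j <;> simp [RGam] <;> fun_prop

theorem smul_RGam_zero_inv {q z : ℂ} (hq : q ≠ 0) (hz : z ≠ 0) :
    (z * q) • RGam 0 q ((z * q)⁻¹) = Glim q z := by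
  ext i j
  fin_cases i <;> fin_cases j <;> simp [RGam, Glim] <;> field_simp

theorem negEntry00_Glim (q z : ℂ) :
    negEntry00 (Glim q z) = wtMat 1 z (-q) (q * z) ((1 - q ^ 2) * z) 1 := by
  ext i j
  fin_cases i <;> fin_cases j <;> simp [negEntry00, Glim, wtMat]

theorem stmt18 (q z : ℂ) (hq : q ≠ 0) (hz : z ≠ 0) :
    Tendsto (fun c : ℂ => (z * q) • RGam c q ((z * q)⁻¹)) (nhds 0) (nhds (Glim q z)) ∧
    negEntry00 (Glim q z) =
      wtMat 1 z (-q) (q * z) ((1 - q ^ 2) * z) 1 := by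
  refine ⟨?_, negEntry00_Glim q z⟩
  rw [← smul_RGam_zero_inv hq hz]
  exact ((continuous_RGam q _).const_smul (z * q)).tendsto 0
end
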